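/- arXiv:2303.17054 — 5 statements merged into one kernel-verified Lean document; each statement's English description precedes it below -/
import Mathlib

section
/- Let V be a complex normed space, X ⊆ V a complex-linear subspace, and P : V → V a continuous real-linear map with ‖P(v)‖ ≤ ‖v‖ for all v, with range contained in X, and with P(x) = x for all x ∈ X. Then the map Q : v ↦ (1/2)•(P(v) − i•P(i•v)) is complex-linear and continuous, satisfies ‖Q(v)‖ ≤ ‖v‖ for all v, has range contained in X, and satisfies Q(x) = x for all x ∈ X. In particular, from a contractive real-linear projection of V onto a complex subspace X one obtains a contractive complex-linear projection of V onto X. -/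
/-!
A real-linear map `f` between complex spaces is the sum of the complex-linear map
`v ↦ ½ (f v - i f (i v))` and a conjugate-linear one. The complex-linear part is contractive when
`f` is (triangle inequality, `‖i v‖ = ‖v‖`), takes values in any complex subspace containing the
range of `f`, and agrees with `f` wherever `f` commutes with multiplication by `i`. A projection
onto a complex subspace `X` does so on `X`, since it fixes both `x` and `i x`.
-/

section

open Complex

section Algebraic

variable {V W : Type*} [AddCommGroup V] [Module ℂ V] [Module ℝ V] [IsScalarTower ℝ ℂ V]
  [AddCommGroup W] [Module ℂ W] [Module ℝ W] [IsScalarTower ℝ ℂ W]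

theorem Complex.smul_eq_re_smul_add_im_smul_I_smul (c : ℂ) (v : V) :
    c • v = c.re • v + c.im • (I • v) := by
  rw [← smul_assoc, ← algebraMap_smul ℂ c.re, ← algebraMap_smul ℂ c.im, smul_eq_mul, ← add_smul]
  congr 1
  simp

namespace LinearMap

def complexOfMapISmul (f : V →ₗ[ℝ] W) (hf : ∀ v, f (I • v) = I • f v) : V →ₗ[ℂ] W where
  toFun := f
  map_add' := f.map_add
  map_smul' c v := by
    simp only [RingHom.id_apply, smul_eq_re_smul_add_im_smul_I_smul c, map_add, map_smul, hf]

noncomputable def complexLinearPart (f : V →ₗ[ℝ] W) : V →ₗ[ℂ] W :=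
  complexOfMapISmul ((2 : ℂ)⁻¹ • (f - I • f ∘ₗ (I • LinearMap.id))) fun v => by
    simp only [smul_apply, sub_apply, comp_apply, id_apply, smul_smul I I, I_mul_I, neg_one_smul,
      map_neg]
    match_scalars
    · linear_combination (2⁻¹ : ℂ) * I_sq
    · ring

theorem complexLinearPart_apply (f : V →ₗ[ℝ] W) (v : V) :
    complexLinearPart f v = (2 : ℂ)⁻¹ • (f v - I • f (I • v)) := rfl

theorem complexLinearPart_apply_of_map_I_smul (f : V →ₗ[ℝ] W) {v : V}
    (hv : f (I • v) = I • f v) : complexLinearPart f v = f v := by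
  rw [complexLinearPart_apply, hv, smul_smul, I_mul_I, neg_one_smul, sub_neg_eq_add, ← two_smul ℂ,
    smul_smul, inv_mul_cancel₀ two_ne_zero, one_smul]

theorem complexLinearPart_apply_mem (f : V →ₗ[ℝ] W) {X : Submodule ℂ W} (hf : ∀ v, f v ∈ X)
    (v : V) : complexLinearPart f v ∈ X :=
  X.smul_mem _ (X.sub_mem (hf v) (X.smul_mem I (hf _)))

end LinearMap

end Algebraic

section Normed

variable {V W : Type*} [SeminormedAddCommGroup V] [NormedSpace ℂ V]
  [SeminormedAddCommGroup W] [NormedSpace ℂ W]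

theorem LinearMap.norm_complexLinearPart_apply_le (f : V →ₗ[ℝ] W) {C : ℝ}
    (hf : ∀ v, ‖f v‖ ≤ C * ‖v‖) (v : V) : ‖f.complexLinearPart v‖ ≤ C * ‖v‖ := by
  have hsum : ‖f v - I • f (I • v)‖ ≤ 2 * (C * ‖v‖) :=
    calc ‖f v - I • f (I • v)‖ ≤ ‖f v‖ + ‖f (I • v)‖ := by
          simpa only [norm_smul, norm_I, one_mul] using norm_sub_le (f v) (I • f (I • v))
      _ ≤ C * ‖v‖ + C * ‖I • v‖ := add_le_add (hf v) (hf _)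
      _ = 2 * (C * ‖v‖) := by rw [norm_smul, norm_I, one_mul]; ring
  rw [LinearMap.complexLinearPart_apply, norm_smul, norm_inv, RCLike.norm_ofNat]
  linarith

noncomputable def ContinuousLinearMap.complexLinearPart (f : V →L[ℝ] W) : V →L[ℂ] W :=
  (LinearMap.complexLinearPart (f : V →ₗ[ℝ] W)).mkContinuous ‖f‖
    (LinearMap.norm_complexLinearPart_apply_le _ f.le_opNorm)

end Normed

end

/-- From a contractive real-linear projection `P` of a complex normed space `V`
onto a complex subspace `X`, the map `Q(v) = (1/2) • (P v - i • P (i • v))` is a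
contractive complex-linear projection of `V` onto `X`. -/
theorem stmt_6 {V : Type*} [NormedAddCommGroup V] [NormedSpace ℂ V]
    (X : Submodule ℂ V) (P : V →L[ℝ] V)
    (hPcontr : ∀ v : V, ‖P v‖ ≤ ‖v‖)
    (hPrange : ∀ v : V, P v ∈ X)
    (hPfix : ∀ x ∈ X, P x = x) :
    ∃ Q : V →L[ℂ] V,
      (∀ v : V, Q v = (2 : ℂ)⁻¹ • (P v - Complex.I • P (Complex.I • v))) ∧
      (∀ v : V, ‖Q v‖ ≤ ‖v‖) ∧
      (∀ v : V, Q v ∈ X) ∧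
      (∀ x ∈ X, Q x = x) := by
  refine ⟨P.complexLinearPart, fun v => rfl, fun v => ?_,
    LinearMap.complexLinearPart_apply_mem (P : V →ₗ[ℝ] V) hPrange, fun x hx => ?_⟩
  · have hP : ∀ v, ‖P v‖ ≤ 1 * ‖v‖ := by simpa only [one_mul] using hPcontr
    exact (LinearMap.norm_complexLinearPart_apply_le (P : V →ₗ[ℝ] V) hP v).trans_eq (one_mul _)
  · have hIx : P (Complex.I • x) = Complex.I • P x := by rw [hPfix x hx, hPfix _ (X.smul_mem _ hx)]
    exact (LinearMap.complexLinearPart_apply_of_map_I_smul (P : V →ₗ[ℝ] V) hIx).trans (hPfix x hx)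
end

section
/- Let G be a finite group acting by linear isometries on real normed spaces W and S. Let V be a G-invariant subspace of W (g • v ∈ V for all g ∈ G, v ∈ V), let φ : V → S be a continuous real-linear G-equivariant map (φ(g • v) = g • φ(v) for v ∈ V), and let ψ : W → S be any continuous real-linear map with ψ(v) = φ(v) for all v ∈ V. Then there is a continuous real-linear map ρ : W → S given by ρ(x) = (1/|G|) • Σ_{g ∈ G} g⁻¹ • ψ(g • x), which satisfies ‖ρ‖ ≤ ‖ψ‖, is G-equivariant (ρ(g • x) = g • ρ(x) for all g ∈ G, x ∈ W), and extends φ (ρ(v) = φ(v) for all v ∈ V). -/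
/-!
Conjugating `ψ` by a group element, `x ↦ g⁻¹ • ψ (g • x)`, preserves the operator norm because
the actions are isometric, and it fixes `ψ` on `V` because `ψ = φ` there and `φ` is equivariant.
The average `ρ` of these conjugates therefore still extends `φ`, has norm at most `‖ψ‖` by the
triangle inequality, and is equivariant since replacing `x` by `h • x` only permutes the summands.
-/

theorem IsIsometricSMul.of_norm_smul_eq {G E : Type*} [Monoid G] [SeminormedAddCommGroup E]
    [DistribMulAction G E] (h : ∀ (g : G) (x : E), ‖g • x‖ = ‖x‖) : IsIsometricSMul G E :=
  ⟨fun g => AddMonoidHomClass.isometry_of_norm (DistribSMul.toAddMonoidHom E g) (h g)⟩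

theorem IsIsometricSMul.norm_smul {G E : Type*} [Monoid G] [SeminormedAddCommGroup E]
    [DistribMulAction G E] [IsIsometricSMul G E] (g : G) (x : E) : ‖g • x‖ = ‖x‖ := by
  simpa using dist_smul g x 0

def DistribSMul.toContinuousLinearMap {G : Type*} (R M : Type*) [Semiring R] [AddCommMonoid M]
    [Module R M] [TopologicalSpace M] [DistribSMul G M] [SMulCommClass G R M]
    [ContinuousConstSMul G M] (g : G) : M →L[R] M :=
  { DistribSMul.toLinearMap R M g with cont := continuous_const_smul g }

section Averaging

variable {G 𝕜 W S : Type*} [Group G] [RCLike 𝕜]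
  [NormedAddCommGroup W] [NormedSpace 𝕜 W] [DistribMulAction G W] [SMulCommClass G 𝕜 W]
  [NormedAddCommGroup S] [NormedSpace 𝕜 S] [DistribMulAction G S] [SMulCommClass G 𝕜 S]

namespace ContinuousLinearMap

section

variable [ContinuousConstSMul G W] [ContinuousConstSMul G S]

def smulConj (g : G) (ψ : W →L[𝕜] S) : W →L[𝕜] S :=
  DistribSMul.toContinuousLinearMap 𝕜 S g⁻¹ ∘L ψ ∘L DistribSMul.toContinuousLinearMap 𝕜 W g

@[simp]
theorem smulConj_apply (g : G) (ψ : W →L[𝕜] S) (x : W) : ψ.smulConj g x = g⁻¹ • ψ (g • x) :=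
  rfl

variable [Fintype G]

variable (G) in
def smulAverage (ψ : W →L[𝕜] S) : W →L[𝕜] S :=
  (Fintype.card G : 𝕜)⁻¹ • ∑ g : G, ψ.smulConj g

theorem smulAverage_apply (ψ : W →L[𝕜] S) (x : W) :
    ψ.smulAverage G x = (Fintype.card G : 𝕜)⁻¹ • ∑ g : G, g⁻¹ • ψ (g • x) := by
  simp [smulAverage, sum_apply]

theorem smulAverage_smul (ψ : W →L[𝕜] S) (h : G) (x : W) :
    ψ.smulAverage G (h • x) = h • ψ.smulAverage G x := by
  rw [smulAverage_apply, smulAverage_apply, smul_comm h (Fintype.card G : 𝕜)⁻¹,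
    Finset.smul_sum (r := h)]
  congr 1
  refine Fintype.sum_equiv (Equiv.mulRight h) _ _ fun g => ?_
  rw [Equiv.coe_mulRight, smul_smul, ← mul_smul h, mul_inv_rev, mul_inv_cancel_left]

theorem smulAverage_apply_of_smulConj_apply {ψ : W →L[𝕜] S} {x : W}
    (hx : ∀ g : G, ψ.smulConj g x = ψ x) : ψ.smulAverage G x = ψ x := by
  have hcard : (Fintype.card G : 𝕜) ≠ 0 := Nat.cast_ne_zero.2 Fintype.card_ne_zero
  rw [smulAverage, smul_apply, sum_apply, Finset.sum_congr rfl fun g _ => hx g, Finset.sum_const,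
    Finset.card_univ, ← Nat.cast_smul_eq_nsmul 𝕜, smul_smul, inv_mul_cancel₀ hcard, one_smul]

end

variable [IsIsometricSMul G W] [IsIsometricSMul G S]

theorem norm_smulConj_le (g : G) (ψ : W →L[𝕜] S) : ‖ψ.smulConj g‖ ≤ ‖ψ‖ :=
  opNorm_le_bound _ (norm_nonneg ψ) fun x => by
    simpa [IsIsometricSMul.norm_smul] using ψ.le_opNorm (g • x)

theorem norm_smulAverage_le [Fintype G] (ψ : W →L[𝕜] S) : ‖ψ.smulAverage G‖ ≤ ‖ψ‖ := by
  have hcard : (0 : ℝ) < Fintype.card G := Nat.cast_pos.2 Fintype.card_pos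
  calc ‖ψ.smulAverage G‖ ≤ (Fintype.card G : ℝ)⁻¹ * ∑ g : G, ‖ψ.smulConj g‖ := by
        rw [smulAverage, norm_smul, norm_inv, RCLike.norm_natCast]
        gcongr
        exact norm_sum_le _ _
    _ ≤ (Fintype.card G : ℝ)⁻¹ * ∑ _g : G, ‖ψ‖ := by
        gcongr with g
        exact norm_smulConj_le g ψ
    _ = ‖ψ‖ := by
        rw [Finset.sum_const, Finset.card_univ, nsmul_eq_mul, inv_mul_cancel_left₀ hcard.ne']

end ContinuousLinearMap

end Averaging

/-- Averaging trick for finite groups acting by linear isometries: any continuous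
real-linear extension `ψ` of a `G`-equivariant continuous real-linear map `φ`
defined on a `G`-invariant subspace can be averaged to a `G`-equivariant
continuous real-linear extension `ρ` with `‖ρ‖ ≤ ‖ψ‖`. -/
theorem stmt_8 {G W S : Type*} [Group G] [Fintype G]
    [NormedAddCommGroup W] [NormedSpace ℝ W]
    [NormedAddCommGroup S] [NormedSpace ℝ S]
    [DistribMulAction G W] [SMulCommClass G ℝ W]
    [DistribMulAction G S] [SMulCommClass G ℝ S]
    (hisoW : ∀ (g : G) (x : W), ‖g • x‖ = ‖x‖)
    (hisoS : ∀ (g : G) (x : S), ‖g • x‖ = ‖x‖)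
    (V : Submodule ℝ W)
    (hV : ∀ (g : G) (v : W), v ∈ V → g • v ∈ V)
    (φ : V →L[ℝ] S)
    (hφeq : ∀ (g : G) (v : V), φ ⟨g • (v : W), hV g v v.2⟩ = g • φ v)
    (ψ : W →L[ℝ] S)
    (hψext : ∀ v : V, ψ (v : W) = φ v) :
    ∃ ρ : W →L[ℝ] S,
      (∀ x : W, ρ x = (Fintype.card G : ℝ)⁻¹ • ∑ g : G, g⁻¹ • ψ (g • x)) ∧
      ‖ρ‖ ≤ ‖ψ‖ ∧
      (∀ (g : G) (x : W), ρ (g • x) = g • ρ x) ∧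
      (∀ v : V, ρ (v : W) = φ v) := by
  have := IsIsometricSMul.of_norm_smul_eq hisoW
  have := IsIsometricSMul.of_norm_smul_eq hisoS
  refine ⟨ψ.smulAverage G, ψ.smulAverage_apply, ψ.norm_smulAverage_le, ψ.smulAverage_smul,
    fun v => ?_⟩
  refine (ψ.smulAverage_apply_of_smulConj_apply fun g => ?_).trans (hψext v)
  rw [ContinuousLinearMap.smulConj_apply, hψext ⟨g • (v : W), hV g v v.2⟩, hφeq, inv_smul_smul,
    hψext]
end

section
/- Let A be a commutative ring and π : A → A a ring homomorphism with π ∘ π = id. If q ∈ A is an idempotent (q·q = q) with π(q) ≠ q, then r := q − q·π(q) is a nonzero idempotent satisfying r·π(r) = 0. -/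
/-! `q - q * π q = q * (1 - π q)` is a product of commuting idempotents. Its image under `π` is
`π q * (1 - q)`, which contains the factor `π q`, killed by `1 - π q`. If it vanished, then
`q = q * π q`, and applying the involution gives `π q = π q * q = q`. -/

section

variable {A : Type*} [CommRing A]

theorem IsIdempotentElem.sub_mul {e f : A} (he : IsIdempotentElem e) (hf : IsIdempotentElem f) :
    IsIdempotentElem (e - e * f) := by
  simpa only [mul_sub, mul_one] using he.mul hf.one_sub

theorem IsIdempotentElem.sub_mul_map_mul_map_eq_zero (φ : A →+* A) {q : A}
    (hq : IsIdempotentElem q) : (q - q * φ q) * φ (q - q * φ q) = 0 := by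
  have hφq : φ q * φ q = φ q := (hq.map φ).eq
  rw [map_sub, map_mul]
  linear_combination (q * φ (φ q) - q) * hφq

theorem sub_mul_map_ne_zero_of_involutive {φ : A →+* A} (hφ : Function.Involutive φ) {q : A}
    (hne : φ q ≠ q) : q - q * φ q ≠ 0 := by
  intro h
  have hq : q = q * φ q := sub_eq_zero.mp h
  apply hne
  calc φ q = φ (q * φ q) := by rw [← hq]
    _ = φ q * q := by rw [map_mul, hφ]
    _ = q := by rw [mul_comm, ← hq]

end

/-- If `π` is a ring involution of a commutative ring and `q` is an idempotent
with `π q ≠ q`, then `r = q - q * π q` is a nonzero idempotent with `r * π r = 0`. -/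
theorem stmt_10 {A : Type*} [CommRing A] (π : A →+* A)
    (hπ : ∀ a : A, π (π a) = a)
    (q : A) (hq : q * q = q) (hne : π q ≠ q) :
    q - q * π q ≠ 0 ∧
    (q - q * π q) * (q - q * π q) = q - q * π q ∧
    (q - q * π q) * π (q - q * π q) = 0 := by
  have hq' : IsIdempotentElem q := hq
  have hπq : IsIdempotentElem (π q) := hq'.map π
  exact ⟨sub_mul_map_ne_zero_of_involutive hπ hne, (hq'.sub_mul hπq).eq,
    hq'.sub_mul_map_mul_map_eq_zero π⟩
end

section
/- Let A be a commutative ring and π : A → A a ring homomorphism with π ∘ π = id. Let q ∈ A be an idempotent with π(q) = 1 − q. Then the map x ↦ x + π(x), restricted to the set q·A = {q·a : a ∈ A}, is a bijection from q·A onto the fixed subring {a ∈ A : π(a) = a}; moreover this map is additive and multiplicative on q·A: (x + π(x))·(y + π(y)) = x·y + π(x·y) for all x, y ∈ q·A. -/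
/-!
Since `π q = 1 - q` is orthogonal to `q`, multiplication by `q` kills the `π`-image of every
element of `q·A`. Hence `x ↦ q * x` inverts `x ↦ x + π x` on both sides (for a fixed point
`a`, `q * a + π (q * a) = q * a + (1 - q) * a = a`), and the cross terms in
`(x + π x) * (y + π y)` vanish.
-/

section CornerOfInvolution

variable {A : Type*} [CommRing A] {π : A →+* A} {q : A}

theorem mul_map_self_eq_zero (hq : q * q = q) (hq' : π q = 1 - q) : q * π q = 0 := by
  rw [hq', mul_sub, mul_one, hq, sub_self]

theorem mul_map_eq_zero_of_mem_corner (hq : q * q = q) (hq' : π q = 1 - q) {x y : A}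
    (hx : ∃ a, x = q * a) (hy : ∃ b, y = q * b) : x * π y = 0 := by
  obtain ⟨a, rfl⟩ := hx
  obtain ⟨b, rfl⟩ := hy
  calc q * a * π (q * b) = (q * π q) * (a * π b) := by rw [map_mul]; ring
    _ = 0 := by rw [mul_map_self_eq_zero hq hq', zero_mul]

theorem mul_add_map_of_mem_corner (hq : q * q = q) (hq' : π q = 1 - q) {x : A}
    (hx : ∃ a, x = q * a) : q * (x + π x) = x := by
  have hqx : q * x = x := by
    obtain ⟨a, rfl⟩ := hx
    rw [← mul_assoc, hq]
  have hqπx : q * π x = 0 := by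
    simpa [mul_comm] using mul_map_eq_zero_of_mem_corner hq hq' ⟨1, (mul_one q).symm⟩ hx
  rw [mul_add, hqx, hqπx, add_zero]

theorem mul_add_map_mul_of_map_eq (hq' : π q = 1 - q) {a : A} (ha : π a = a) :
    q * a + π (q * a) = a := by
  rw [map_mul, hq', ha]
  ring

theorem invOn_mul_add_map (hq : q * q = q) (hq' : π q = 1 - q) :
    Set.InvOn (q * ·) (fun x => x + π x) {x : A | ∃ a, x = q * a} {a : A | π a = a} :=
  ⟨fun _ hx => mul_add_map_of_mem_corner hq hq' hx, fun _ ha => mul_add_map_mul_of_map_eq hq' ha⟩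

theorem add_map_mul_add_map_of_mem_corner (hq : q * q = q) (hq' : π q = 1 - q) {x y : A}
    (hx : ∃ a, x = q * a) (hy : ∃ b, y = q * b) :
    (x + π x) * (y + π y) = x * y + π (x * y) := by
  have hxy := mul_map_eq_zero_of_mem_corner hq hq' hx hy
  have hyx := mul_map_eq_zero_of_mem_corner hq hq' hy hx
  rw [map_mul]
  linear_combination hxy + hyx

end CornerOfInvolution

/-- If `π` is a ring involution of a commutative ring and `q` is an idempotent
with `π q = 1 - q`, then `x ↦ x + π x` is a bijection from the corner `q·A` onto
the fixed subring of `π`, and is additive and multiplicative on `q·A`. -/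
theorem stmt_11 {A : Type*} [CommRing A] (π : A →+* A)
    (hπ : ∀ a : A, π (π a) = a)
    (q : A) (hq : q * q = q) (hq' : π q = 1 - q) :
    Set.BijOn (fun x => x + π x) {x : A | ∃ a : A, x = q * a} {a : A | π a = a} ∧
    (∀ x ∈ {x : A | ∃ a : A, x = q * a}, ∀ y ∈ {x : A | ∃ a : A, x = q * a},
      (x + y) + π (x + y) = (x + π x) + (y + π y)) ∧
    (∀ x ∈ {x : A | ∃ a : A, x = q * a}, ∀ y ∈ {x : A | ∃ a : A, x = q * a},
      (x * y) + π (x * y) = (x + π x) * (y + π y)) := by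
  have mapsTo : Set.MapsTo (fun x => x + π x) {x : A | ∃ a, x = q * a} {a : A | π a = a} :=
    fun x _ => by simp only [Set.mem_ofPred_eq, map_add, hπ, add_comm]
  have mapsTo_mul : Set.MapsTo (q * ·) {a : A | π a = a} {x : A | ∃ a, x = q * a} :=
    fun a _ => ⟨a, rfl⟩
  refine ⟨(invOn_mul_add_map hq hq').bijOn mapsTo mapsTo_mul, ?_, ?_⟩
  · intro x _ y _
    rw [map_add]
    ring
  · intro x hx y hy
    exact (add_map_mul_add_map_of_mem_corner hq hq' hx hy).symm
end

section
/- Let H be a complex Hilbert space and U : H → H a conjugation, i.e. U is additive, U(c • x) = (conj c) • U(x), ‖U(x)‖ = ‖x‖, and U(U(x)) = x. Let S be a set of continuous complex-linear operators on H such that for every T ∈ S there exists T' ∈ S with T'(x) = U(T(U(x))) for all x. Then for every operator T in the double centralizer (bicommutant) of S in the ring of continuous complex-linear operators on H, there exists an operator T' also in the double centralizer of S with T'(x) = U(T(U(x))) for all x ∈ H. -/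
/-!
Conjugation by `U`, `e : T ↦ U ∘ T ∘ U`, is a multiplicative bijection of `H →L[ℂ] H` (the two
conjugate-linearities cancel). Applying a multiplicative bijection to `e⁻¹(s) c = c e⁻¹(s)` shows
that `e⁻¹(S) ⊆ S` implies `e(S') ⊆ S'` for the centralizer `S'`. Used for `e⁻¹` and then for `e`,
this turns `e(S) ⊆ S` into `e⁻¹(S') ⊆ S'` and then into `e(S'') ⊆ S''`.
-/

namespace Set

variable {M N : Type*} [Mul M] [Mul N] {S : Set M} {T : Set N}

theorem mapsTo_centralizer_of_mapsTo_symm (e : M ≃* N) (h : MapsTo e.symm T S) :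
    MapsTo e S.centralizer T.centralizer := by
  intro c hc t ht
  simpa using congrArg e (hc _ (h ht))

theorem mapsTo_centralizer_centralizer (e : M ≃* N) (h : MapsTo e S T) :
    MapsTo e S.centralizer.centralizer T.centralizer.centralizer :=
  mapsTo_centralizer_of_mapsTo_symm e
    (mapsTo_centralizer_of_mapsTo_symm e.symm (e.symm_symm ▸ h))

end Set

namespace ContinuousLinearEquiv

variable {R₁ R₂ E F : Type*} [Semiring R₁] [Semiring R₂] {σ : R₁ →+* R₂} {σ' : R₂ →+* R₁}
  [RingHomInvPair σ σ'] [RingHomInvPair σ' σ]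
  [TopologicalSpace E] [AddCommMonoid E] [Module R₁ E]
  [TopologicalSpace F] [AddCommMonoid F] [Module R₂ F]

def conjMulEquiv (e : E ≃SL[σ] F) : (E →L[R₁] E) ≃* (F →L[R₂] F) where
  toFun T := (e : E →SL[σ] F).comp (T.comp (e.symm : F →SL[σ'] E))
  invFun T := (e.symm : F →SL[σ'] E).comp (T.comp (e : E →SL[σ] F))
  left_inv T := by ext; simp
  right_inv T := by ext; simp
  map_mul' A B := by ext; simp

end ContinuousLinearEquiv

def LinearIsometryEquiv.ofInvolutive {𝕜 E : Type*} [RCLike 𝕜] [SeminormedAddCommGroup E]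
    [NormedSpace 𝕜 E] (U : E → E) (hadd : ∀ x y, U (x + y) = U x + U y)
    (hsmul : ∀ (c : 𝕜) x, U (c • x) = starRingEnd 𝕜 c • U x) (hiso : ∀ x, ‖U x‖ = ‖x‖)
    (hinv : ∀ x, U (U x) = x) : E ≃ₗᵢ⋆[𝕜] E where
  toFun := U
  invFun := U
  map_add' := hadd
  map_smul' := hsmul
  left_inv := hinv
  right_inv := hinv
  norm_map' := hiso

theorem stmt_18_general {H : Type*} [NormedAddCommGroup H] [InnerProductSpace ℂ H]
    (U : H → H)
    (hadd : ∀ x y : H, U (x + y) = U x + U y)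
    (hsmul : ∀ (c : ℂ) (x : H), U (c • x) = (starRingEnd ℂ) c • U x)
    (hiso : ∀ x : H, ‖U x‖ = ‖x‖)
    (hinv : ∀ x : H, U (U x) = x)
    (S : Set (H →L[ℂ] H))
    (hS : ∀ T ∈ S, ∃ T' ∈ S, ∀ x : H, T' x = U (T (U x))) :
    ∀ T ∈ Subring.centralizer
        ((Subring.centralizer S : Subring (H →L[ℂ] H)) : Set (H →L[ℂ] H)),
      ∃ T' ∈ Subring.centralizer
          ((Subring.centralizer S : Subring (H →L[ℂ] H)) : Set (H →L[ℂ] H)),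
        ∀ x : H, T' x = U (T (U x)) := by
  set Φ := (LinearIsometryEquiv.ofInvolutive U hadd hsmul hiso hinv).toContinuousLinearEquiv
    |>.conjMulEquiv
  have hΦS : Set.MapsTo Φ S S := by
    intro T hT
    obtain ⟨T', hT', hT'_eq⟩ := hS T hT
    exact (ContinuousLinearMap.ext hT'_eq : T' = Φ T) ▸ hT'
  intro T hT
  refine ⟨Φ T, ?_, fun _ ↦ rfl⟩
  simp only [← SetLike.mem_coe, Subring.coe_centralizer] at hT ⊢
  exact Set.mapsTo_centralizer_centralizer Φ hΦS hT

/-- If a set `S` of operators on a complex Hilbert space is invariant under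
conjugation by a conjugation `U`, then so is its double centralizer
(bicommutant) in the ring of continuous complex-linear operators. -/
theorem stmt_18 {H : Type*} [NormedAddCommGroup H] [InnerProductSpace ℂ H]
    [CompleteSpace H]
    (U : H → H)
    (hadd : ∀ x y : H, U (x + y) = U x + U y)
    (hsmul : ∀ (c : ℂ) (x : H), U (c • x) = (starRingEnd ℂ) c • U x)
    (hiso : ∀ x : H, ‖U x‖ = ‖x‖)
    (hinv : ∀ x : H, U (U x) = x)
    (S : Set (H →L[ℂ] H))
    (hS : ∀ T ∈ S, ∃ T' ∈ S, ∀ x : H, T' x = U (T (U x))) :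
    ∀ T ∈ Subring.centralizer
        ((Subring.centralizer S : Subring (H →L[ℂ] H)) : Set (H →L[ℂ] H)),
      ∃ T' ∈ Subring.centralizer
          ((Subring.centralizer S : Subring (H →L[ℂ] H)) : Set (H →L[ℂ] H)),
        ∀ x : H, T' x = U (T (U x)) :=
  stmt_18_general U hadd hsmul hiso hinv S hS
end
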